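/- Let λ, μ, γ be real numbers with λ + μ + γ ≠ 0, and let M(λ,μ,γ) be the 3×3 real matrix whose rows are (λ,λ,λ), (μ,μ,μ), (γ,γ,γ). If λμγ ≠ 0 and one of the following holds: (1) λμ(λ+μ)(λ+μ+γ) > 0 and γ(λ+μ) < 0; (2) λμ(λ+μ)(λ+μ+γ) < 0 and γ(λ+μ) > 0; (3) λ + μ = 0; then the evolution algebra E_{M(λ,μ,γ)} is isomorphic to the evolution algebra E₈ whose structure matrix has rows (1,0,0), (1,0,0), (−1,0,0). -/

import Mathlib

/-!
In `E_{M(λ,μ,γ)}` the product is `x * y = B(x, y) u` with `B = diag(λ, μ, γ)` and `u = (1, 1, 1)`,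
while in `E₈` it is `x * y = C(x, y) e₀` with `C = diag(1, 1, -1)`. Writing `s = λ + μ + γ`, a linear
map `f` with `f u = s e₀` and `C(f x, f y) = s B(x, y)` is therefore an isomorphism, and such an
isometry from `s B` to `C` exists as soon as `s B = diag(sλ, sμ, sγ)` has signature `(2, 1)`. The
hypotheses force this: `sλ + sμ + sγ = s² > 0`, while `sλ · sμ · sγ = s³λμγ < 0`, so exactly one of
the three weights is negative. Up to relabelling the basis, it is `sγ`.
-/

/-- Evolution algebra multiplication on ℝ³ determined by a structure matrix `A`:
`(x ∗_A y) j = ∑ i, x i * y i * A i j`. -/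
def evolMul (A : Matrix (Fin 3) (Fin 3) ℝ) (x y : Fin 3 → ℝ) : Fin 3 → ℝ :=
  fun j => ∑ i, x i * y i * A i j

/-- The evolution algebras with structure matrices `A` and `B` are isomorphic:
there is an ℝ-linear equivalence of ℝ³ intertwining the two multiplications. -/
def EvolIso (A B : Matrix (Fin 3) (Fin 3) ℝ) : Prop :=
  ∃ f : (Fin 3 → ℝ) ≃ₗ[ℝ] (Fin 3 → ℝ),
    ∀ x y, f (evolMul A x y) = evolMul B (f x) (f y)

open Matrix

theorem EvolIso.trans {A B C : Matrix (Fin 3) (Fin 3) ℝ} (hAB : EvolIso A B) (hBC : EvolIso B C) :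
    EvolIso A C := by
  obtain ⟨f, hf⟩ := hAB
  obtain ⟨g, hg⟩ := hBC
  exact ⟨f.trans g, fun x y => by simp only [LinearEquiv.trans_apply, hf, hg]⟩

theorem evolIso_submatrix (A : Matrix (Fin 3) (Fin 3) ℝ) (σ : Equiv.Perm (Fin 3)) :
    EvolIso A (A.submatrix σ σ) := by
  refine ⟨LinearEquiv.funCongrLeft ℝ ℝ σ, fun x y => funext fun j => ?_⟩
  simp only [LinearEquiv.funCongrLeft_apply, LinearMap.funLeft_apply, evolMul, submatrix_apply]
  exact (Equiv.sum_comp σ fun i => x i * y i * A i (σ j)).symm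

theorem evolIso_of_mulVec {A B P : Matrix (Fin 3) (Fin 3) ℝ} (hP : P.det ≠ 0)
    (h : ∀ x y, P *ᵥ evolMul A x y = evolMul B (P *ᵥ x) (P *ᵥ y)) : EvolIso A B :=
  ⟨P.toLinearEquiv (Pi.basisFun ℝ (Fin 3)) hP.isUnit, by
    simpa only [toLinearEquiv_apply, toLin_eq_toLin', toLin'_apply] using h⟩

theorem evolIso_constRows_swap_one_two (l m g : ℝ) :
    EvolIso !![l, l, l; m, m, m; g, g, g] !![l, l, l; g, g, g; m, m, m] := by
  convert evolIso_submatrix _ (Equiv.swap 1 2) using 1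
  ext i j
  fin_cases i <;> fin_cases j <;> rfl

theorem evolIso_constRows_swap_zero_two (l m g : ℝ) :
    EvolIso !![l, l, l; m, m, m; g, g, g] !![g, g, g; m, m, m; l, l, l] := by
  convert evolIso_submatrix _ (Equiv.swap 0 2) using 1
  ext i j
  fin_cases i <;> fin_cases j <;> rfl

theorem evolMul_constRows (l m g : ℝ) (x y : Fin 3 → ℝ) (j : Fin 3) :
    evolMul !![l, l, l; m, m, m; g, g, g] x y j = l * x 0 * y 0 + m * x 1 * y 1 + g * x 2 * y 2 := by
  fin_cases j <;> simp only [evolMul, Fin.sum_univ_three, of_apply, cons_val', cons_val_zero, cons_val_one, cons_val, cons_val_fin_one,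
    Fin.isValue, Fin.zero_eta, Fin.mk_one, Fin.reduceFinMk] <;> ring

theorem evolMul_E8 (x y : Fin 3 → ℝ) :
    evolMul !![1, 0, 0; 1, 0, 0; -1, 0, 0] x y = ![x 0 * y 0 + x 1 * y 1 - x 2 * y 2, 0, 0] := by
  funext j
  fin_cases j <;> simp only [evolMul, Fin.sum_univ_three, of_apply, cons_val', cons_val_zero, cons_val_one, cons_val, cons_val_fin_one,
    Fin.isValue, Fin.zero_eta, Fin.mk_one, Fin.reduceFinMk] <;> ring

theorem evolIso_constRows_E8 {l m g : ℝ} (hl : 0 < (l + m + g) * l) (hm : 0 < (l + m + g) * m)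
    (hg : (l + m + g) * g < 0) :
    EvolIso !![l, l, l; m, m, m; g, g, g] !![1, 0, 0; 1, 0, 0; -1, 0, 0] := by
  have hlm : 0 < (l + m + g) * (l + m) := by linarith
  have hs : l + m + g ≠ 0 := by rintro h; simp [h] at hlm
  have hlm0 : l + m ≠ 0 := by rintro h; simp [h] at hlm
  obtain ⟨r, hr, hr2⟩ : ∃ r : ℝ, r ≠ 0 ∧ r ^ 2 * (l + m) = (l + m + g) * l * m := by
    have : 0 < (l + m + g) * l * ((l + m + g) * m) / ((l + m + g) * (l + m)) := by positivity
    refine ⟨√_, (Real.sqrt_pos.2 this).ne', ?_⟩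
    rw [Real.sq_sqrt this.le]
    field_simp
  obtain ⟨t, ht, ht2⟩ : ∃ t : ℝ, t ≠ 0 ∧ t ^ 2 * (l + m) = -g := by
    have : 0 < -((l + m + g) * g) / ((l + m + g) * (l + m)) := div_pos (by linarith) hlm
    refine ⟨√_, (Real.sqrt_pos.2 this).ne', ?_⟩
    rw [Real.sq_sqrt this.le]
    field_simp
  -- Row 0 is `x ↦ B(u, x)`, so `P u = s e₀`; rows 1 and 2 vanish on `u`, and `r`, `t` are the
  -- normalisations making `C(P x, P y) = s B(x, y)` once both sides are multiplied by `λ + μ`.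
  refine evolIso_of_mulVec (P := !![l, m, g; r, -r, 0; -(l * t), -(m * t), (l + m) * t]) ?_ ?_
  · have hdet : (!![l, m, g; r, -r, 0; -(l * t), -(m * t), (l + m) * t]).det
        = -(r * t * (l + m) * (l + m + g)) := by
      simp only [det_fin_three, of_apply, cons_val', cons_val_zero, cons_val_one, cons_val,
        cons_val_fin_one, Fin.isValue]
      ring
    rw [hdet]
    exact neg_ne_zero.2 (mul_ne_zero (mul_ne_zero (mul_ne_zero hr ht) hlm0) hs)
  · intro x y
    funext j
    fin_cases j <;> simp only [mulVec, dotProduct, Fin.sum_univ_three, evolMul_constRows, evolMul_E8,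
      of_apply, cons_val', cons_val_zero, cons_val_one, cons_val, cons_val_fin_one,
      Fin.isValue, Fin.zero_eta, Fin.mk_one, Fin.reduceFinMk]
    · apply mul_left_cancel₀ hlm0
      linear_combination (-(x 0 - x 1) * (y 0 - y 1)) * hr2
        + ((l * x 0 + m * x 1 - (l + m) * x 2) * (l * y 0 + m * y 1 - (l + m) * y 2)) * ht2
    · ring
    · ring

theorem exactly_one_neg_of_add_pos_of_mul_neg {a b c : ℝ} (hsum : 0 < a + b + c)
    (hprod : a * b * c < 0) :
    (0 < a ∧ 0 < b ∧ c < 0) ∨ (0 < a ∧ b < 0 ∧ 0 < c) ∨ (a < 0 ∧ 0 < b ∧ 0 < c) := by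
  have hc : c ≠ 0 := by rintro rfl; simp at hprod
  rcases hc.lt_or_gt with hc | hc
  · have hab : 0 < a * b := pos_of_mul_neg_left hprod hc.le
    rcases mul_pos_iff.1 hab with hab | hab
    · exact Or.inl ⟨hab.1, hab.2, hc⟩
    · linarith
  · rcases mul_neg_iff.1 (neg_of_mul_neg_left hprod hc.le) with hab | hab
    · exact Or.inr (Or.inl ⟨hab.1, hab.2, hc⟩)
    · exact Or.inr (Or.inr ⟨hab.1, hab.2, hc⟩)

theorem add_mul_mul_mul_neg_of_cases {l m g : ℝ} (hlmg : l * m * g ≠ 0)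
    (h : (l * m * (l + m) * (l + m + g) > 0 ∧ g * (l + m) < 0) ∨
         (l * m * (l + m) * (l + m + g) < 0 ∧ g * (l + m) > 0) ∨
         l + m = 0) :
    (l + m + g) * l * m * g < 0 := by
  have hfactor : (l + m + g) * l * m * g * (l + m) ^ 2
      = (l * m * (l + m) * (l + m + g)) * (g * (l + m)) := by ring
  rcases h with ⟨h1, h2⟩ | ⟨h1, h2⟩ | h3
  · exact neg_of_mul_neg_left (hfactor ▸ mul_neg_of_pos_of_neg h1 h2) (sq_nonneg _)
  · exact neg_of_mul_neg_left (hfactor ▸ mul_neg_of_neg_of_pos h1 h2) (sq_nonneg _)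
  · have hm : m = -l := by linarith
    subst hm
    have : l ≠ 0 ∧ g ≠ 0 := by simp_all
    nlinarith [mul_pos (sq_pos_of_ne_zero this.1) (sq_pos_of_ne_zero this.2)]

theorem stmt_general (l m g : ℝ)
    (h1 : l * m * g ≠ 0)
    (h : (l * m * (l + m) * (l + m + g) > 0 ∧ g * (l + m) < 0) ∨
         (l * m * (l + m) * (l + m + g) < 0 ∧ g * (l + m) > 0) ∨
         l + m = 0) :
    EvolIso (!![l, l, l; m, m, m; g, g, g] : Matrix (Fin 3) (Fin 3) ℝ) (!![1, 0, 0; 1, 0, 0; -1, 0, 0] : Matrix (Fin 3) (Fin 3) ℝ) := by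
  have hprod := add_mul_mul_mul_neg_of_cases h1 h
  have hs : l + m + g ≠ 0 := by rintro hs; simp [hs] at hprod
  have hsum_pos : 0 < (l + m + g) * l + (l + m + g) * m + (l + m + g) * g := by
    nlinarith [sq_pos_of_ne_zero hs]
  have hprod_neg : (l + m + g) * l * ((l + m + g) * m) * ((l + m + g) * g) < 0 := by
    nlinarith [mul_neg_of_pos_of_neg (sq_pos_of_ne_zero hs) hprod]
  rcases exactly_one_neg_of_add_pos_of_mul_neg hsum_pos hprod_neg with ⟨hl, hm, hg⟩ | ⟨hl, hm, hg⟩ |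
    ⟨hl, hm, hg⟩
  · exact evolIso_constRows_E8 hl hm hg
  · exact (evolIso_constRows_swap_one_two l m g).trans
      (evolIso_constRows_E8 (by linarith) (by linarith) (by linarith))
  · exact (evolIso_constRows_swap_zero_two l m g).trans
      (evolIso_constRows_E8 (by linarith) (by linarith) (by linarith))

theorem stmt (l m g : ℝ) (hsum : l + m + g ≠ 0)
    (h1 : l * m * g ≠ 0)
    (h : (l * m * (l + m) * (l + m + g) > 0 ∧ g * (l + m) < 0) ∨
         (l * m * (l + m) * (l + m + g) < 0 ∧ g * (l + m) > 0) ∨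
         l + m = 0) :
    EvolIso (!![l, l, l; m, m, m; g, g, g] : Matrix (Fin 3) (Fin 3) ℝ) (!![1, 0, 0; 1, 0, 0; -1, 0, 0] : Matrix (Fin 3) (Fin 3) ℝ) :=
  stmt_general l m g h1 h
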